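/- arXiv:1411.2807 — 3 statements merged into one kernel-verified Lean document; each statement's English description precedes it below -/
import Mathlib

section
/- (Theorem 3, lower bound for the SZK model.) In the SZK setting, assume λ_{k+1}(t) ≤ λ_k(t) and μ_{k+1}(t) ≤ μ_k(t) for all 1 ≤ k ≤ S−1 and all t ≥ 0. Set α_k(t) = −∑_{i=1}^S (D B(t) D⁻¹)_{ik} for 1 ≤ k ≤ S and β_*(t) = max_{1≤k≤S} α_k(t). Let z*, z** : [0,∞) → ℝ^S be differentiable with z'(t) = B(t)z(t) + f(t) for all t ≥ 0, where f(t)_i = λ_i(t). If D(z*(0) − z**(0)) ≥ 0 componentwise, then ‖D(z*(t) − z**(t))‖₁ ≥ exp(−∫₀ᵗ β_*(τ) dτ) · ‖D(z*(0) − z**(0))‖₁ for all t ≥ 0. -/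
open Set Filter

/-- The reduced matrix `B(t)` of the SZK model on `{0,…,S}` with arrival rates
`λ_k` and service rates `μ_k`: `B_{ij} = A_{ij} − A_{i0}` where `A(t)` is the
transposed intensity matrix and `A_{i0} = λ_i`; 1-based indices `1,…,S` are
encoded by `i : Fin S ↦ i+1`. -/
def szkB (S : ℕ) (lam mu : ℕ → ℝ → ℝ) (t : ℝ) : Matrix (Fin S) (Fin S) ℝ :=
  fun i j =>
    (if (j : ℕ) < (i : ℕ) then lam ((i : ℕ) - (j : ℕ)) t
     else if (i : ℕ) < (j : ℕ) then mu ((j : ℕ) - (i : ℕ)) t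
     else -((∑ k ∈ Finset.Icc 1 ((i : ℕ) + 1), mu k t) +
            ∑ k ∈ Finset.Icc 1 (S - ((i : ℕ) + 1)), lam k t))
    - lam ((i : ℕ) + 1) t

/-- The upper-triangular matrix `D` with `D_{kj} = d_k` for `j ≥ k`. -/
def triD (S : ℕ) (d : ℕ → ℝ) : Matrix (Fin S) (Fin S) ℝ :=
  fun i j => if i ≤ j then d ((i : ℕ) + 1) else 0

/-!
Put `w = D (z* - z**)`. Then `w' = C w` with `C = D B D⁻¹`, whose entries are
`C i k = d (i+1) / d (k+1) * ∑_{M > i} (A M (k+1) - A M k)`. For `k < i` every summand is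
`λ_{M-k-1} - λ_{M-k} ≥ 0`; for `k > i` the columns of `A` sum to zero, so the tail sum is minus
the head sum, whose summands are `μ_{k+1-M} - μ_{k-M} ≤ 0`. Hence `C` is a Metzler matrix and
`w` stays in the nonnegative orthant. There `‖w‖₁ = ∑ w i` and
`(∑ w i)' = ∑_k (∑_i C i k) w k = -∑_k α_k w k ≥ -β_* ∑ w i`, and Grönwall's argument gives
the bound.
-/

open Finset Matrix

lemma ContinuousOn.exists_first_zero {m : ℝ → ℝ} {a b : ℝ} (hm : ContinuousOn m (Icc a b))
    (ha : 0 < m a) (hb : ∃ τ ∈ Icc a b, m τ ≤ 0) :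
    ∃ t₀ ∈ Ioc a b, m t₀ = 0 ∧ ∀ s ∈ Icc a t₀, 0 ≤ m s := by
  have hzero : ∀ τ ∈ Icc a b, m τ ≤ 0 → ∃ r ∈ Icc a τ, m r = 0 := fun τ hτ hmτ =>
    intermediate_value_Icc' hτ.1 (hm.mono (Icc_subset_Icc_right hτ.2)) ⟨hmτ, ha.le⟩
  have hZ : IsCompact (Icc a b ∩ m ⁻¹' {0}) := isCompact_Icc.of_isClosed_subset
    (hm.preimage_isClosed_of_isClosed isClosed_Icc isClosed_singleton) inter_subset_left
  obtain ⟨τ, hτ, hmτ⟩ := hb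
  obtain ⟨r, hr, hmr⟩ := hzero τ hτ hmτ
  obtain ⟨t₀, ⟨ht₀, hmt₀⟩, hleast⟩ := hZ.exists_isLeast ⟨r, ⟨hr.1, hr.2.trans hτ.2⟩, hmr⟩
  refine ⟨t₀, ⟨ht₀.1.lt_of_ne ?_, ht₀.2⟩, hmt₀, fun s hs => ?_⟩
  · rintro rfl
    exact ha.ne' hmt₀
  by_contra! hms
  obtain ⟨r', hr', hmr'⟩ := hzero s ⟨hs.1, hs.2.trans ht₀.2⟩ hms.le
  have hsr' : t₀ ≤ r' := hleast ⟨⟨hr'.1, hr'.2.trans (hs.2.trans ht₀.2)⟩, hmr'⟩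
  have hst₀ : s = t₀ := le_antisymm hs.2 (hsr'.trans hr'.2)
  exact hms.ne (by rw [hst₀]; exact hmt₀)

lemma HasDerivWithinAt.nonpos_of_isMinOn_Icc {u : ℝ → ℝ} {L a b : ℝ}
    (hu : HasDerivWithinAt u L (Icc a b) b) (hab : a < b) (hmin : IsMinOn u (Icc a b) b) :
    L ≤ 0 := by
  have hcone : a - b ∈ posTangentConeAt (Icc a b) b :=
    sub_mem_posTangentConeAt_of_segment_subset
      ((convex_Icc a b).segment_subset (right_mem_Icc.2 hab.le) (left_mem_Icc.2 hab.le))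
  have := hmin.localize.hasFDerivWithinAt_nonneg hu.hasFDerivWithinAt hcone
  rw [ContinuousLinearMap.toSpanSingleton_apply, smul_eq_mul] at this
  nlinarith

lemma IsCompact.exists_forall_sum_row_lt {ι : Type*} [Fintype ι] {C : ℝ → Matrix ι ι ℝ} {K : Set ℝ}
    (hK : IsCompact K) (hC : ContinuousOn C K) : ∃ M, ∀ t ∈ K, ∀ i, ∑ j, C t i j < M := by
  obtain ⟨M, hM⟩ := hK.exists_bound_of_continuousOn
    ((continuous_id.matrix_mulVec continuous_const).comp_continuousOn hC (g := fun A => A *ᵥ 1))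
  refine ⟨M + 1, fun t ht i => ?_⟩
  have hrow : ∑ j, C t i j ≤ M := calc
    ∑ j, C t i j = (C t *ᵥ 1) i := by simp [mulVec, dotProduct]
    _ ≤ ‖C t *ᵥ 1‖ := (Real.le_norm_self _).trans (norm_le_pi_norm _ i)
    _ ≤ M := hM t ht
  linarith

section MetzlerSystem

variable {ι : Type*} [Fintype ι] {C : ℝ → Matrix ι ι ℝ} {w : ℝ → ι → ℝ}

lemma pos_add_exp_of_hasDerivWithinAt_mulVec {T M ε : ℝ}
    (hoff : ∀ t ∈ Ici (0 : ℝ), ∀ i j, i ≠ j → 0 ≤ C t i j)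
    (hw : ∀ t ∈ Ici (0 : ℝ), HasDerivWithinAt w (C t *ᵥ w t) (Ici 0) t) (hw0 : 0 ≤ w 0)
    (hM : ∀ t ∈ Icc 0 T, ∀ i, ∑ j, C t i j < M) (hε : 0 < ε) :
    ∀ t ∈ Icc 0 T, ∀ i, 0 < w t i + ε * Real.exp (M * t) := by
  intro t ht i
  by_contra! hneg
  let u : ι → ℝ → ℝ := fun j s => w s j + ε * Real.exp (M * s)
  have hu : ∀ s ∈ Ici (0 : ℝ), ∀ j, HasDerivWithinAt (u j)
      ((C s *ᵥ w s) j + ε * (Real.exp (M * s) * M)) (Ici 0) s := fun s hs j =>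
    (hasDerivWithinAt_pi.1 (hw s hs) j).add
      ((((hasDerivAt_id s).const_mul M).exp.const_mul ε).hasDerivWithinAt.congr_deriv (by simp))
  let m : ℝ → ℝ := fun s => univ.inf' ⟨i, mem_univ i⟩ fun j => u j s
  have hm : ContinuousOn m (Icc 0 T) := ContinuousOn.finset_inf'_apply _ fun j _ s hs =>
    (hu s hs.1 j).continuousWithinAt.mono Icc_subset_Ici_self
  have hm0 : 0 < m 0 := (lt_inf'_iff _).2 fun j _ => by
    simp [u, add_pos_of_nonneg_of_pos (hw0 j) hε]
  obtain ⟨t₀, ht₀, hmt₀, hm_nonneg⟩ :=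
    hm.exists_first_zero hm0 ⟨t, ht, inf'_le_of_le _ (mem_univ i) hneg⟩
  obtain ⟨i₀, -, hi₀⟩ := exists_mem_eq_inf' ⟨i, mem_univ i⟩ fun j => u j t₀
  have hu_nonneg : ∀ s ∈ Icc 0 t₀, ∀ j, 0 ≤ u j s := fun s hs j =>
    (hm_nonneg s hs).trans (inf'_le _ (mem_univ j))
  have hui₀ : u i₀ t₀ = 0 := hi₀ ▸ hmt₀
  have hderiv_nonpos := ((hu t₀ ht₀.1.le i₀).mono Icc_subset_Ici_self).nonpos_of_isMinOn_Icc ht₀.1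
    fun s hs => by simpa [hui₀] using hu_nonneg s hs i₀
  -- at the first zero of `u i₀` the couplings to the other `u j ≥ 0` are nonnegative and the row
  -- sum of `C` is below `M`, so the perturbation `ε e^{M t}` makes the derivative positive
  have hcoupling : 0 ≤ ∑ j, C t₀ i₀ j * u j t₀ := sum_nonneg fun j _ => by
    rcases eq_or_ne i₀ j with rfl | hj
    · simp [hui₀]
    · exact mul_nonneg (hoff t₀ ht₀.1.le i₀ j hj) (hu_nonneg t₀ ⟨ht₀.1.le, le_rfl⟩ j)
  have hmulVec : (C t₀ *ᵥ w t₀) i₀ =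
      ∑ j, C t₀ i₀ j * u j t₀ - ε * Real.exp (M * t₀) * ∑ j, C t₀ i₀ j := by
    simp only [mulVec, dotProduct, u, mul_sum, ← sum_sub_distrib]
    exact sum_congr rfl fun j _ => by ring
  have hrow := mul_lt_mul_of_pos_left (hM t₀ ⟨ht₀.1.le, ht₀.2⟩ i₀)
    (mul_pos hε (Real.exp_pos (M * t₀)))
  nlinarith

theorem nonneg_of_hasDerivWithinAt_mulVec (hC : ContinuousOn C (Ici 0))
    (hoff : ∀ t ∈ Ici (0 : ℝ), ∀ i j, i ≠ j → 0 ≤ C t i j)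
    (hw : ∀ t ∈ Ici (0 : ℝ), HasDerivWithinAt w (C t *ᵥ w t) (Ici 0) t) (hw0 : 0 ≤ w 0) :
    ∀ t ∈ Ici (0 : ℝ), 0 ≤ w t := by
  intro T hT i
  obtain ⟨M, hM⟩ := (isCompact_Icc (a := 0) (b := T)).exists_forall_sum_row_lt
    (hC.mono Icc_subset_Ici_self)
  refine le_of_forall_pos_lt_add fun δ hδ => ?_
  have := pos_add_exp_of_hasDerivWithinAt_mulVec hoff hw hw0 hM
    (div_pos hδ (Real.exp_pos (M * T))) T ⟨hT, le_rfl⟩ i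
  rwa [div_mul_cancel₀ _ (Real.exp_pos _).ne'] at this

end MetzlerSystem

theorem exp_neg_integral_mul_le_of_hasDerivWithinAt {g g' β : ℝ → ℝ}
    (hβ : ContinuousOn β (Ici 0)) (hg : ∀ t ∈ Ici (0 : ℝ), HasDerivWithinAt g (g' t) (Ici 0) t)
    (hg' : ∀ t ∈ Ici (0 : ℝ), -(β t * g t) ≤ g' t) :
    ∀ t ∈ Ici (0 : ℝ), Real.exp (-∫ τ in (0 : ℝ)..t, β τ) * g 0 ≤ g t := by
  -- extend `β` continuously to all of `ℝ` so that its primitive is differentiable everywhere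
  let β' : ℝ → ℝ := fun τ => β (max τ 0)
  have hβ'_eq : ∀ τ ∈ Ici (0 : ℝ), β' τ = β τ := fun τ hτ => by simp [β', max_eq_left hτ.out]
  have hβ' : Continuous β' :=
    hβ.comp_continuous (continuous_id.max continuous_const) fun τ => le_max_right τ 0
  let G : ℝ → ℝ := fun t => ∫ τ in (0 : ℝ)..t, β' τ
  have hψ : ∀ t ∈ Ici (0 : ℝ), HasDerivWithinAt (fun t => Real.exp (G t) * g t)
      (Real.exp (G t) * (β t * g t + g' t)) (Ici 0) t := fun t ht =>
    ((hβ'.integral_hasStrictDerivAt 0 t).hasDerivAt.exp.hasDerivWithinAt.mul (hg t ht)).congr_deriv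
      (by rw [hβ'_eq t ht]; ring)
  have hmono : MonotoneOn (fun t => Real.exp (G t) * g t) (Ici 0) :=
    monotoneOn_of_hasDerivWithinAt_nonneg (convex_Ici 0) (fun t ht => (hψ t ht).continuousWithinAt)
      (fun t ht => (hψ t (interior_subset ht)).mono interior_subset)
      fun t ht => mul_nonneg (Real.exp_nonneg _) (by linarith [hg' t (interior_subset ht)])
  intro t ht
  have hG : ∫ τ in (0 : ℝ)..t, β τ = G t := intervalIntegral.integral_congr fun τ hτ => by
    rw [uIcc_of_le ht.out] at hτ
    exact (hβ'_eq τ hτ.1).symm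
  have := hmono self_mem_Ici ht ht
  simp only [G, intervalIntegral.integral_same, Real.exp_zero, one_mul] at this
  rwa [hG, Real.exp_neg, inv_mul_le_iff₀ (Real.exp_pos _)]

lemma neg_mul_sum_le_sum_mulVec {ι : Type*} [Fintype ι] {C : Matrix ι ι ℝ} {w : ι → ℝ} {β : ℝ}
    (hcol : ∀ k, -β ≤ ∑ i, C i k) (hw : 0 ≤ w) : -(β * ∑ i, w i) ≤ ∑ i, (C *ᵥ w) i := calc
  -(β * ∑ i, w i) = ∑ k, -β * w k := by rw [mul_sum, ← sum_neg_distrib]; simp only [neg_mul]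
  _ ≤ ∑ k, (∑ i, C i k) * w k := sum_le_sum fun k _ => mul_le_mul_of_nonneg_right (hcol k) (hw k)
  _ = ∑ i, (C *ᵥ w) i := by simp only [mulVec, dotProduct, sum_mul]; exact sum_comm

lemma HasDerivWithinAt.mulVec_sub_of_affine {ι : Type*} [Fintype ι] [DecidableEq ι]
    {z₁ z₂ : ℝ → ι → ℝ} {B D D' : Matrix ι ι ℝ} {v : ι → ℝ} {s : Set ℝ} {t : ℝ}
    (h₁ : HasDerivWithinAt z₁ (B *ᵥ z₁ t + v) s t) (h₂ : HasDerivWithinAt z₂ (B *ᵥ z₂ t + v) s t)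
    (hD : D' * D = 1) :
    HasDerivWithinAt (fun s => D *ᵥ (z₁ s - z₂ s)) ((D * B * D') *ᵥ (D *ᵥ (z₁ t - z₂ t))) s t := by
  have hlin : HasDerivWithinAt (fun s => D *ᵥ (z₁ s - z₂ s))
      (D *ᵥ (B *ᵥ z₁ t + v - (B *ᵥ z₂ t + v))) s t :=
    (mulVecLin D).toContinuousLinearMap.hasFDerivAt.comp_hasDerivWithinAt t (h₁.sub h₂)
  convert hlin using 1
  simp only [mulVec_mulVec, Matrix.mul_assoc, hD, Matrix.mul_one, add_sub_add_right_eq_sub,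
    mulVec_sub]

section SZKMatrix

variable {S : ℕ} {lam mu : ℕ → ℝ → ℝ} {d : ℕ → ℝ} {t : ℝ}

/-- The transposed intensity matrix `A(t)` on the states `0,…,S`. -/
def szkA (S : ℕ) (lam mu : ℕ → ℝ → ℝ) (t : ℝ) (i j : ℕ) : ℝ :=
  if j < i then lam (i - j) t
  else if i < j then mu (j - i) t
  else -((∑ k ∈ Icc 1 i, mu k t) + ∑ k ∈ Icc 1 (S - i), lam k t)

lemma szkB_apply (i j : Fin S) :
    szkB S lam mu t i j = szkA S lam mu t (i + 1) (j + 1) - szkA S lam mu t (i + 1) 0 := by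
  have hi0 : szkA S lam mu t (i + 1) 0 = lam (i + 1) t := if_pos (Nat.succ_pos _)
  rw [hi0, szkB, szkA]
  congr 1
  split_ifs <;> first | omega | (congr 1; omega) | rfl

lemma sum_szkA_col {K : ℕ} (hK : K ≤ S) : ∑ M ∈ range (S + 1), szkA S lam mu t M K = 0 := by
  rw [← sum_range_add_sum_Ico _ (by omega : K ≤ S + 1),
    sum_eq_sum_Ico_succ_bot (by omega : K < S + 1)]
  have above : ∑ M ∈ range K, szkA S lam mu t M K = ∑ r ∈ Icc 1 K, mu r t := by
    refine sum_nbij' (fun M => K - M) (fun r => K - r) ?_ ?_ ?_ ?_ ?_ <;>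
      intro M hM <;> simp only [Finset.mem_range, Finset.mem_Icc] at hM ⊢ <;>
      first | omega | skip
    rw [szkA, if_neg (by omega), if_pos hM]
  have below : ∑ M ∈ Ico (K + 1) (S + 1), szkA S lam mu t M K = ∑ r ∈ Icc 1 (S - K), lam r t := by
    refine sum_nbij' (fun M => M - K) (fun r => r + K) ?_ ?_ ?_ ?_ ?_ <;>
      intro M hM <;> simp only [Finset.mem_Ico, Finset.mem_Icc] at hM ⊢ <;>
      first | omega | skip
    rw [szkA, if_pos (by omega)]
  have diag : szkA S lam mu t K K = -((∑ k ∈ Icc 1 K, mu k t) + ∑ k ∈ Icc 1 (S - K), lam k t) := by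
    simp [szkA]
  rw [above, diag, below]
  ring

noncomputable def triDInv (S : ℕ) (d : ℕ → ℝ) : Matrix (Fin S) (Fin S) ℝ :=
  fun l k => ((if l = k then 1 else 0) - if (l : ℕ) + 1 = k then 1 else 0) / d (k + 1)

-- Rows of both `triD` and `szkB` have the shape `l ↦ g (l + 1) - g 0`.
lemma sum_mul_triDInv (g : ℕ → ℝ) (k : Fin S) :
    ∑ l : Fin S, (g ((l : ℕ) + 1) - g 0) * triDInv S d l k =
      (g ((k : ℕ) + 1) - g k) / d ((k : ℕ) + 1) := by
  simp only [triDInv, mul_div_assoc', mul_sub, mul_ite, mul_one, mul_zero, ← sum_div,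
    sum_sub_distrib, sum_ite_eq', Finset.mem_univ, if_true]
  congr 1
  obtain ⟨_ | k, hk⟩ := k
  · simp
  · rw [sum_eq_single ⟨k, by omega⟩
      (fun l _ hl => if_neg fun h => hl (Fin.ext (by simp at h ⊢; omega))) (by simp)]
    simp

lemma triD_mul_triDInv (hd : ∀ k, 1 ≤ k → k ≤ S → 0 < d k) : triD S d * triDInv S d = 1 := by
  ext i k
  let g : ℕ → ℝ := fun L => if (i : ℕ) < L then d (i + 1) else 0
  have hrow : ∀ l : Fin S, triD S d i l = g ((l : ℕ) + 1) - g 0 := fun l => by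
    simp only [triD, g, Fin.le_def, Nat.lt_succ_iff, Nat.not_lt_zero, if_false, sub_zero]
  simp only [mul_apply, hrow, sum_mul_triDInv, one_apply]
  rcases lt_trichotomy (i : ℕ) k with h | h | h
  · simp [g, h, h.trans (Nat.lt_succ_self _), Fin.ne_of_lt h]
  · simp [g, Fin.ext h, (hd _ (by omega) k.isLt).ne']
  · simp [g, h.not_gt, (Nat.lt_succ_iff.not).2 h.not_ge, (Fin.ne_of_lt h).symm]

lemma inv_triD (hd : ∀ k, 1 ≤ k → k ≤ S → 0 < d k) : (triD S d)⁻¹ = triDInv S d :=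
  inv_eq_right_inv (triD_mul_triDInv hd)

lemma sum_triD_mul (φ : ℕ → ℝ) (i : Fin S) :
    ∑ j : Fin S, triD S d i j * φ ((j : ℕ) + 1) =
      d (i + 1) * ∑ M ∈ Ico ((i : ℕ) + 1) (S + 1), φ M := by
  simp only [triD, Fin.le_def, ite_mul, zero_mul]
  rw [Fin.sum_univ_eq_sum_range (fun j => if (i : ℕ) ≤ j then d (i + 1) * φ (j + 1) else 0),
    ← sum_range_add_sum_Ico _ i.isLt.le, sum_eq_zero fun j hj => if_neg (by simpa using hj),
    zero_add, sum_congr rfl fun j hj => if_pos (Finset.mem_Ico.1 hj).1, ← mul_sum, sum_Ico_add']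

noncomputable def szkC (S : ℕ) (lam mu : ℕ → ℝ → ℝ) (d : ℕ → ℝ) (t : ℝ) :
    Matrix (Fin S) (Fin S) ℝ :=
  triD S d * szkB S lam mu t * (triD S d)⁻¹

lemma szkC_apply (hd : ∀ k, 1 ≤ k → k ≤ S → 0 < d k) (i k : Fin S) :
    szkC S lam mu d t i k = d (i + 1) *
      (∑ M ∈ Ico ((i : ℕ) + 1) (S + 1), (szkA S lam mu t M (k + 1) - szkA S lam mu t M k)) /
        d (k + 1) := by
  have hcol : ∀ j : Fin S, (szkB S lam mu t * triDInv S d) j k =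
      (szkA S lam mu t (j + 1) (k + 1) - szkA S lam mu t (j + 1) k) / d (k + 1) := fun j => by
    simp only [mul_apply, szkB_apply]
    exact sum_mul_triDInv (fun L => szkA S lam mu t (j + 1) L) k
  rw [szkC, inv_triD hd, Matrix.mul_assoc, mul_apply]
  simp only [hcol]
  rw [sum_triD_mul (fun M => (szkA S lam mu t M (k + 1) - szkA S lam mu t M k) / d (k + 1)),
    ← sum_div, mul_div_assoc]

lemma szkC_nonneg_of_ne (hd : ∀ k, 1 ≤ k → k ≤ S → 0 < d k)
    (hlam : ∀ k, 1 ≤ k → k < S → lam (k + 1) t ≤ lam k t)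
    (hmu : ∀ k, 1 ≤ k → k < S → mu (k + 1) t ≤ mu k t) {i k : Fin S} (hik : i ≠ k) :
    0 ≤ szkC S lam mu d t i k := by
  rw [szkC_apply hd]
  refine div_nonneg (mul_nonneg (hd _ (by omega) i.isLt).le ?_) (hd _ (by omega) k.isLt).le
  rcases lt_or_gt_of_ne hik with hik | hik
  · have hcol :
        ∑ M ∈ range (S + 1), (szkA S lam mu t M (k + 1) - szkA S lam mu t M k) = 0 := by
      rw [sum_sub_distrib, sum_szkA_col k.isLt, sum_szkA_col (by omega), sub_zero]
    rw [← sum_range_add_sum_Ico _ (by omega : (i : ℕ) + 1 ≤ S + 1)] at hcol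
    rw [eq_neg_of_add_eq_zero_right hcol, neg_nonneg]
    refine sum_nonpos fun M hM => ?_
    have hMk : M < k := by rw [Finset.mem_range] at hM; exact lt_of_le_of_lt (by omega) hik
    rw [szkA, szkA, if_neg (by omega), if_pos (by omega), if_neg (by omega), if_pos hMk,
      sub_nonpos, show k + 1 - M = (k - M) + 1 by omega]
    exact hmu _ (by omega) (by omega)
  · refine sum_nonneg fun M hM => ?_
    rw [Finset.mem_Ico] at hM
    have hkM : (k : ℕ) + 1 < M := lt_of_lt_of_le (by omega) hM.1
    rw [szkA, szkA, if_pos hkM, if_pos (by omega), sub_nonneg,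
      show M - k = (M - (k + 1)) + 1 by omega]
    exact hlam _ (by omega) (by omega)

lemma continuousOn_szkB {s : Set ℝ} (hlam : ∀ k, 1 ≤ k → k ≤ S → ContinuousOn (lam k) s)
    (hmu : ∀ k, 1 ≤ k → k ≤ S → ContinuousOn (mu k) s) : ContinuousOn (szkB S lam mu) s := by
  refine continuousOn_pi.2 fun i => continuousOn_pi.2 fun j => ?_
  have hsum : ∀ r : ℕ → ℝ → ℝ, (∀ k, 1 ≤ k → k ≤ S → ContinuousOn (r k) s) → ∀ n ≤ S,
      ContinuousOn (fun t => ∑ k ∈ Icc 1 n, r k t) s := fun r hr n hn =>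
    continuousOn_finsetSum _ fun k hk =>
      hr k (Finset.mem_Icc.1 hk).1 ((Finset.mem_Icc.1 hk).2.trans hn)
  simp only [szkB]
  refine ContinuousOn.sub ?_ (hlam _ (by omega) i.isLt)
  split_ifs
  · exact hlam _ (by omega) (by omega)
  · exact hmu _ (by omega) (by omega)
  · exact ((hsum mu hmu _ i.isLt).add (hsum lam hlam _ (by omega))).neg

lemma continuousOn_szkC {s : Set ℝ} (hlam : ∀ k, 1 ≤ k → k ≤ S → ContinuousOn (lam k) s)
    (hmu : ∀ k, 1 ≤ k → k ≤ S → ContinuousOn (mu k) s) : ContinuousOn (szkC S lam mu d) s :=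
  ((continuous_const.matrix_mul continuous_id).matrix_mul continuous_const).comp_continuousOn
    (continuousOn_szkB hlam hmu)

end SZKMatrix

theorem szk_lower_bound_general
    (S : ℕ) (hS : 1 ≤ S)
    (lam mu : ℕ → ℝ → ℝ) (d : ℕ → ℝ)
    (hlam : ∀ k, 1 ≤ k → k ≤ S →
      ContinuousOn (lam k) (Ici 0) ∧ ∀ t ∈ Ici (0 : ℝ), 0 ≤ lam k t)
    (hmu : ∀ k, 1 ≤ k → k ≤ S →
      ContinuousOn (mu k) (Ici 0) ∧ ∀ t ∈ Ici (0 : ℝ), 0 ≤ mu k t)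
    (hmono : ∀ k, 1 ≤ k → k ≤ S - 1 → ∀ t ∈ Ici (0 : ℝ),
      lam (k + 1) t ≤ lam k t ∧ mu (k + 1) t ≤ mu k t)
    (hd : ∀ k, 1 ≤ k → k ≤ S → 0 < d k)
    (alpha : Fin S → ℝ → ℝ)
    (halpha : ∀ k t, alpha k t = -∑ i, (triD S d * szkB S lam mu t * (triD S d)⁻¹) i k)
    (blow : ℝ → ℝ) (hblow : ∀ t, blow t = ⨆ k, alpha k t)
    (f : ℝ → Fin S → ℝ)
    (z₁ z₂ : ℝ → Fin S → ℝ)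
    (hz₁ : ∀ t ∈ Ici (0 : ℝ), ∀ i, HasDerivWithinAt (fun s => z₁ s i)
      ((szkB S lam mu t).mulVec (z₁ t) i + f t i) (Ici 0) t)
    (hz₂ : ∀ t ∈ Ici (0 : ℝ), ∀ i, HasDerivWithinAt (fun s => z₂ s i)
      ((szkB S lam mu t).mulVec (z₂ t) i + f t i) (Ici 0) t)
    (hinit : ∀ i, 0 ≤ (triD S d).mulVec (z₁ 0 - z₂ 0) i) :
    ∀ t ∈ Ici (0 : ℝ),
      Real.exp (-∫ τ in (0 : ℝ)..t, blow τ) *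
          ∑ i, |(triD S d).mulVec (z₁ 0 - z₂ 0) i| ≤
        ∑ i, |(triD S d).mulVec (z₁ t - z₂ t) i| := by
  have : Nonempty (Fin S) := ⟨⟨0, hS⟩⟩
  have halpha : ∀ k t, alpha k t = -∑ i, szkC S lam mu d t i k := halpha
  let w : ℝ → Fin S → ℝ := fun t => triD S d *ᵥ (z₁ t - z₂ t)
  have hw : ∀ t ∈ Ici (0 : ℝ), HasDerivWithinAt w (szkC S lam mu d t *ᵥ w t) (Ici 0) t :=
    fun t ht => (hasDerivWithinAt_pi.2 (hz₁ t ht)).mulVec_sub_of_affine (v := f t)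
      (hasDerivWithinAt_pi.2 (hz₂ t ht))
      (by rw [inv_triD hd]; exact mul_eq_one_comm.1 (triD_mul_triDInv hd))
  have hC : ContinuousOn (szkC S lam mu d) (Ici 0) :=
    continuousOn_szkC (fun k h₁ h₂ => (hlam k h₁ h₂).1) (fun k h₁ h₂ => (hmu k h₁ h₂).1)
  have hw_nonneg : ∀ t ∈ Ici (0 : ℝ), 0 ≤ w t := nonneg_of_hasDerivWithinAt_mulVec hC
    (fun t ht _ _ hik => szkC_nonneg_of_ne hd (fun k h₁ h₂ => (hmono k h₁ (by omega) t ht).1)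
      (fun k h₁ h₂ => (hmono k h₁ (by omega) t ht).2) hik) hw hinit
  have halpha_cont : ∀ k, ContinuousOn (alpha k) (Ici 0) := fun k =>
    (continuousOn_finsetSum _ fun i _ =>
      (continuous_apply_apply i k).comp_continuousOn hC).neg.congr fun t _ => halpha k t
  have hblow_cont : ContinuousOn blow (Ici 0) :=
    (ContinuousOn.finset_sup'_apply univ_nonempty fun k _ => halpha_cont k).congr
      fun t _ => (hblow t).trans (sup'_univ_eq_ciSup _).symm
  have hcol : ∀ t k, -blow t ≤ ∑ i, szkC S lam mu d t i k := fun t k => by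
    rw [neg_le, ← halpha, hblow]
    exact le_ciSup (Finite.bddAbove_range fun k => alpha k t) k
  have hgronwall := exp_neg_integral_mul_le_of_hasDerivWithinAt (g := fun t => ∑ i, w t i)
    hblow_cont (fun t ht => HasDerivWithinAt.fun_sum fun i _ => hasDerivWithinAt_pi.1 (hw t ht) i)
    fun t ht => neg_mul_sum_le_sum_mulVec (hcol t) (hw_nonneg t ht)
  intro t ht
  calc _ = Real.exp (-∫ τ in (0 : ℝ)..t, blow τ) * ∑ i, w 0 i := by
        rw [sum_congr rfl fun i _ => abs_of_nonneg (hinit i)]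
    _ ≤ ∑ i, w t i := hgronwall t ht
    _ ≤ ∑ i, |w t i| := sum_le_sum fun i _ => le_abs_self _

/-- Theorem 3 (lower bound) for the SZK model with nonincreasing arrival and
service rates, under nonnegative initial difference `D(z*(0) − z**(0)) ≥ 0`. -/
theorem szk_lower_bound
    (S : ℕ) (hS : 1 ≤ S)
    (lam mu : ℕ → ℝ → ℝ) (d : ℕ → ℝ)
    (hlam : ∀ k, 1 ≤ k → k ≤ S →
      ContinuousOn (lam k) (Ici 0) ∧ ∀ t ∈ Ici (0 : ℝ), 0 ≤ lam k t)
    (hmu : ∀ k, 1 ≤ k → k ≤ S →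
      ContinuousOn (mu k) (Ici 0) ∧ ∀ t ∈ Ici (0 : ℝ), 0 ≤ mu k t)
    (hmono : ∀ k, 1 ≤ k → k ≤ S - 1 → ∀ t ∈ Ici (0 : ℝ),
      lam (k + 1) t ≤ lam k t ∧ mu (k + 1) t ≤ mu k t)
    (hd : ∀ k, 1 ≤ k → k ≤ S → 0 < d k)
    (alpha : Fin S → ℝ → ℝ)
    (halpha : ∀ k t, alpha k t = -∑ i, (triD S d * szkB S lam mu t * (triD S d)⁻¹) i k)
    (blow : ℝ → ℝ) (hblow : ∀ t, blow t = ⨆ k, alpha k t)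
    (f : ℝ → Fin S → ℝ) (hf : ∀ t, ∀ i : Fin S, f t i = lam ((i : ℕ) + 1) t)
    (z₁ z₂ : ℝ → Fin S → ℝ)
    (hz₁ : ∀ t ∈ Ici (0 : ℝ), ∀ i, HasDerivWithinAt (fun s => z₁ s i)
      ((szkB S lam mu t).mulVec (z₁ t) i + f t i) (Ici 0) t)
    (hz₂ : ∀ t ∈ Ici (0 : ℝ), ∀ i, HasDerivWithinAt (fun s => z₂ s i)
      ((szkB S lam mu t).mulVec (z₂ t) i + f t i) (Ici 0) t)
    (hinit : ∀ i, 0 ≤ (triD S d).mulVec (z₁ 0 - z₂ 0) i) :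
    ∀ t ∈ Ici (0 : ℝ),
      Real.exp (-∫ τ in (0 : ℝ)..t, blow τ) *
          ∑ i, |(triD S d).mulVec (z₁ 0 - z₂ 0) i| ≤
        ∑ i, |(triD S d).mulVec (z₁ t - z₂ t) i| :=
  szk_lower_bound_general S hS lam mu d hlam hmu hmono hd alpha halpha blow hblow f z₁ z₂ hz₁ hz₂
    hinit
end

section
/- (Theorem 4, upper bound and weak ergodicity for a chain with absorption in zero.) In the absorbing-state setting, B(t) is essentially nonnegative for every t ≥ 0, and so is H(t) := D B(t) D⁻¹ for any diagonal D = diag(d_1,…,d_S) with positive entries. Set α_k(t) = ∑_{j=0, j≠k}^{S} q_{kj}(t) − ∑_{i=1, i≠k}^{S} (d_i/d_k) q_{ki}(t) for 1 ≤ k ≤ S (so that α_k(t) = −∑_{i=1}^S H(t)_{ik}), and β^*(t) = min_{1≤k≤S} α_k(t). Then for any two differentiable functions z*, z** : [0,∞) → ℝ^S satisfying z'(t) = B(t)z(t) for all t ≥ 0, one has ‖D(z*(t) − z**(t))‖₁ ≤ exp(−∫₀ᵗ β^*(τ) dτ) · ‖D(z*(0) − z**(0))‖₁ for all t ≥ 0;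 moreover, if ∫₀^∞ β^*(t) dt = +∞ then ‖z*(t) − z**(t)‖₁ → 0 as t → ∞. -/
/-!
The difference `w = D (z* − z**)` solves `w' = H(t) w` with `H = D B D⁻¹` essentially
nonnegative. For small `h > 0` the Euler step `I + h H(t)` is then a nonnegative matrix whose
column sums are `1 − h α_k(t) ≤ 1 − h β*(t)`, so it contracts the `ℓ¹` norm by that factor. Hence
the right Dini derivative of `‖w‖₁` is at most `−β* ‖w‖₁`, and a comparison argument for
`exp (∫₀ᵗ β*) ‖w(t)‖₁` gives the exponential bound; weak ergodicity follows since `D` is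
invertible.
-/

open Set Filter

/-- The reduced matrix `B(t)` of a Markov chain on `{0,…,S}` with transition
intensities `q_{ij}(t)`: `B_{ij} = q_{ji}` for `i ≠ j` and
`B_{ii} = −∑_{j≠i} q_{ij}` (1-based indices `1,…,S` encoded by
`i : Fin S ↦ i+1`). -/
def absB (S : ℕ) (q : ℕ → ℕ → ℝ → ℝ) (t : ℝ) : Matrix (Fin S) (Fin S) ℝ :=
  fun i j =>
    if i = j then -∑ k ∈ (Finset.range (S + 1)).erase ((i : ℕ) + 1), q ((i : ℕ) + 1) k t
    else q ((j : ℕ) + 1) ((i : ℕ) + 1) t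

open Topology Matrix

lemma slope_mul (f g : ℝ → ℝ) (x z : ℝ) :
    slope (fun t => f t * g t) x z = f z * slope g x z + g x * slope f x z := by
  simp only [slope_def_field]
  rcases eq_or_ne z x with rfl | h
  · simp
  · field_simp [sub_ne_zero.2 h]
    ring

lemma hasDerivWithinAt_integral_Ici {β : ℝ → ℝ} {a b x : ℝ} (hβ : ContinuousOn β (Icc a b))
    (hx : x ∈ Ico a b) :
    HasDerivWithinAt (fun u => ∫ τ in a..u, β τ) (β x) (Ici x) x := by
  have hIcc : Icc a b ∈ 𝓝[>] x := Icc_mem_nhdsGT_of_mem hx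
  refine intervalIntegral.integral_hasDerivWithinAt_right (t := Ioi x) ?_
    ⟨_, hIcc, hβ.aestronglyMeasurable measurableSet_Icc⟩
    ((hβ x (Ico_subset_Icc_self hx)).mono_of_mem_nhdsWithin hIcc)
  exact (hβ.mono (uIcc_subset_Icc (left_mem_Icc.2 (hx.1.trans hx.2.le))
    (Ico_subset_Icc_self hx))).intervalIntegrable

lemma continuousOn_integral_Icc {β : ℝ → ℝ} {a b : ℝ} (hβ : ContinuousOn β (Icc a b)) :
    ContinuousOn (fun u => ∫ τ in a..u, β τ) (Icc a b) := by
  rcases le_or_gt a b with hab | hab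
  · simpa [uIcc_of_le hab] using intervalIntegral.continuousOn_primitive_interval
      (hβ.mono (uIcc_of_le hab).subset).integrableOn_Icc
  · simp [Icc_eq_empty_of_lt hab]

lemma le_exp_neg_integral_mul_of_slope {f β : ℝ → ℝ} {a b : ℝ} (hf : ContinuousOn f (Icc a b))
    (hβ : ContinuousOn β (Icc a b))
    (hslope : ∀ x ∈ Ico a b, ∀ r, -β x * f x < r → ∃ᶠ z in 𝓝[>] x, slope f x z < r) :
    ∀ t ∈ Icc a b, f t ≤ Real.exp (-∫ τ in a..t, β τ) * f a := by
  set E : ℝ → ℝ := fun t => Real.exp (∫ τ in a..t, β τ)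
  have hE : ∀ x ∈ Ico a b, HasDerivWithinAt E (E x * β x) (Ici x) x := fun x hx =>
    (hasDerivWithinAt_integral_Ici hβ hx).exp
  -- `E * f` has nonpositive right lower Dini derivative, hence does not increase.
  have hEf : ∀ x ∈ Ico a b, ∀ r, 0 < r →
      ∃ᶠ z in 𝓝[>] x, slope (fun t => E t * f t) x z < r := by
    intro x hx r hr
    have hEx : 0 < E x := Real.exp_pos _
    set r₀ := -β x * f x + r / (2 * E x)
    have hlim : Tendsto (fun z => E z * r₀ + f x * slope E x z) (𝓝[>] x)
        (𝓝 (E x * r₀ + f x * (E x * β x))) :=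
      (((hE x hx).continuousWithinAt.mono Ioi_subset_Ici_self).tendsto.mul_const r₀).add
        (((hasDerivWithinAt_iff_tendsto_slope' (lt_irrefl x)).1 (hE x hx).Ioi_of_Ici).const_mul
          (f x))
    have hlt : E x * r₀ + f x * (E x * β x) < r := by
      have : E x * r₀ + f x * (E x * β x) = r / 2 := by
        simp only [r₀]
        field_simp
        ring
      linarith
    have hr₀ : -β x * f x < r₀ := lt_add_of_pos_right _ (div_pos hr (mul_pos two_pos hEx))
    refine ((hslope x hx r₀ hr₀).and_eventually (hlim.eventually_lt_const hlt)).mono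
      fun z ⟨hfz, hz⟩ => ?_
    rw [slope_mul]
    nlinarith [Real.exp_pos (∫ τ in a..z, β τ)]
  intro t ht
  have key := image_le_of_liminf_slope_right_le_deriv_boundary (B := fun _ => E a * f a)
    ((continuousOn_integral_Icc hβ).rexp.mul hf) le_rfl continuousOn_const
    (fun x _ => hasDerivWithinAt_const x _ _) hEf ht
  simp only [E, intervalIntegral.integral_same, Real.exp_zero, one_mul] at key
  rw [Real.exp_neg, inv_mul_eq_div, le_div_iff₀ (Real.exp_pos _), mul_comm]
  exact key

section EssentiallyNonnegative

variable {ι : Type*} [Fintype ι]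

lemma sum_abs_mulVec_le_of_nonneg {M : Matrix ι ι ℝ} (hM : ∀ i j, 0 ≤ M i j) (w : ι → ℝ) :
    ∑ i, |(M *ᵥ w) i| ≤ ∑ j, (∑ i, M i j) * |w j| := by
  calc ∑ i, |(M *ᵥ w) i| ≤ ∑ i, ∑ j, M i j * |w j| := by
        gcongr with i
        refine (Finset.abs_sum_le_sum_abs _ _).trans_eq ?_
        simp only [abs_mul, abs_of_nonneg (hM i _)]
    _ = ∑ j, (∑ i, M i j) * |w j| := by
        rw [Finset.sum_comm]
        simp only [Finset.sum_mul]

lemma sum_abs_add_mul_mulVec_le {H : Matrix ι ι ℝ} {b h : ℝ} (hH : ∀ i j, i ≠ j → 0 ≤ H i j)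
    (hcol : ∀ j, ∑ i, H i j ≤ -b) (hh : 0 ≤ h) (hdiag : ∀ i, 0 ≤ 1 + h * H i i) (w : ι → ℝ) :
    ∑ i, |w i + h * (H *ᵥ w) i| ≤ (1 - h * b) * ∑ i, |w i| := by
  classical
  have hM : ∀ i j, 0 ≤ (1 + h • H) i j := by
    intro i j
    rcases eq_or_ne i j with rfl | hij
    · simpa using hdiag i
    · simpa [one_apply_ne hij] using mul_nonneg hh (hH i j hij)
  have hMcol : ∀ j, ∑ i, (1 + h • H) i j ≤ 1 - h * b := by
    intro j
    simp only [Matrix.add_apply, Matrix.smul_apply, smul_eq_mul, Finset.sum_add_distrib,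
      ← Finset.mul_sum, one_apply, Finset.sum_ite_eq', Finset.mem_univ, if_true]
    nlinarith [hcol j]
  calc ∑ i, |w i + h * (H *ᵥ w) i| = ∑ i, |((1 + h • H) *ᵥ w) i| := by
        simp [add_mulVec, smul_mulVec]
    _ ≤ ∑ j, (∑ i, (1 + h • H) i j) * |w j| := sum_abs_mulVec_le_of_nonneg hM w
    _ ≤ (1 - h * b) * ∑ i, |w i| := by
        rw [Finset.mul_sum]
        gcongr with j
        exact hMcol j

lemma eventually_slope_sum_abs_lt {H : Matrix ι ι ℝ} {b : ℝ} (hH : ∀ i j, i ≠ j → 0 ≤ H i j)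
    (hcol : ∀ j, ∑ i, H i j ≤ -b) {w : ℝ → ι → ℝ} {x : ℝ}
    (hw : ∀ i, HasDerivWithinAt (fun s => w s i) ((H *ᵥ w x) i) (Ioi x) x) {r : ℝ}
    (hr : -b * ∑ i, |w x i| < r) :
    ∀ᶠ z in 𝓝[>] x, slope (fun s => ∑ i, |w s i|) x z < r := by
  set v := H *ᵥ w x
  set ρ : ℝ → ℝ := fun z => ∑ i, |slope (fun s => w s i) x z - v i|
  have hρ : Tendsto ρ (𝓝[>] x) (𝓝 0) := by
    have : Tendsto ρ (𝓝[>] x) (𝓝 (∑ i, |v i - v i|)) := tendsto_finsetSum _ fun i _ =>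
      (((hasDerivWithinAt_iff_tendsto_slope' (lt_irrefl x)).1 (hw i)).sub_const (v i)).abs
    simpa using this
  have hdiag : ∀ i, ∀ᶠ z in 𝓝[>] x, 0 ≤ 1 + (z - x) * H i i := by
    intro i
    have : Tendsto (fun z => 1 + (z - x) * H i i) (𝓝[>] x) (𝓝 1) :=
      ((continuous_const.add ((continuous_id.sub continuous_const).mul_const _)).tendsto'
        x 1 (by simp)).mono_left nhdsWithin_le_nhds
    exact this.eventually_const_le one_pos
  filter_upwards [Filter.eventually_all.2 hdiag, hρ.eventually_lt_const (sub_pos.2 hr),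
    self_mem_nhdsWithin] with z hz hρz (hxz : x < z)
  have hzx : 0 < z - x := sub_pos.2 hxz
  have hstep : ∑ i, |w z i| ≤ (1 - (z - x) * b) * ∑ i, |w x i| + (z - x) * ρ z := by
    calc ∑ i, |w z i| ≤ ∑ i, (|w x i + (z - x) * v i|
          + (z - x) * |slope (fun s => w s i) x z - v i|) := by
          gcongr with i
          have := sub_smul_slope (fun s => w s i) x z
          rw [smul_eq_mul, vsub_eq_sub] at this
          calc |w z i| = |(w x i + (z - x) * v i)
                + (z - x) * (slope (fun s => w s i) x z - v i)| := by
                congr 1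
                linarith
            _ ≤ _ := (abs_add_le _ _).trans_eq (by rw [abs_mul, abs_of_pos hzx])
      _ = ∑ i, |w x i + (z - x) * v i| + (z - x) * ρ z := by
          rw [Finset.sum_add_distrib, Finset.mul_sum]
      _ ≤ _ := by
          gcongr
          exact sum_abs_add_mul_mulVec_le hH hcol hzx.le hz (w x)
  rw [slope_def_field, div_lt_iff₀ hzx]
  nlinarith

theorem sum_abs_le_exp_neg_integral {H : ℝ → Matrix ι ι ℝ} {β : ℝ → ℝ} {w : ℝ → ι → ℝ} {a : ℝ}
    (hH : ∀ t ∈ Ici a, ∀ i j, i ≠ j → 0 ≤ H t i j)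
    (hcol : ∀ t ∈ Ici a, ∀ j, ∑ i, H t i j ≤ -β t) (hβ : ContinuousOn β (Ici a))
    (hw : ∀ t ∈ Ici a, ∀ i, HasDerivWithinAt (fun s => w s i) ((H t *ᵥ w t) i) (Ici a) t)
    {t : ℝ} (ht : a ≤ t) :
    ∑ i, |w t i| ≤ Real.exp (-∫ τ in a..t, β τ) * ∑ i, |w a i| := by
  refine le_exp_neg_integral_mul_of_slope (f := fun s => ∑ i, |w s i|) ?_
    (hβ.mono Icc_subset_Ici_self) (fun x hx r hr => ?_) t ⟨ht, le_rfl⟩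
  · exact continuousOn_finsetSum _ fun i _ s hs =>
      ((hw s hs.1 i).continuousWithinAt.mono Icc_subset_Ici_self).abs
  · refine (eventually_slope_sum_abs_lt (hH x hx.1) (hcol x hx.1) (fun i => ?_) hr).frequently
    exact (hw x hx.1 i).mono fun s (hs : x < s) => hx.1.trans hs.le

lemma sum_abs_le_sum_inv_mul_sum_abs_mul {e : ι → ℝ} (he : ∀ i, 0 < e i) (v : ι → ℝ) :
    ∑ i, |v i| ≤ (∑ i, (e i)⁻¹) * ∑ i, |e i * v i| := by
  rw [Finset.mul_sum]
  gcongr with i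
  calc |v i| = (e i)⁻¹ * |e i * v i| := by
        rw [abs_mul, abs_of_pos (he i), inv_mul_cancel_left₀ (he i).ne']
    _ ≤ (∑ j, (e j)⁻¹) * |e i * v i| := by
        gcongr
        exact Finset.single_le_sum (fun j _ => (inv_pos.2 (he j)).le) (Finset.mem_univ i)

lemma continuousOn_ciInf [Nonempty ι] {f : ι → ℝ → ℝ} {s : Set ℝ}
    (hf : ∀ i, ContinuousOn (f i) s) : ContinuousOn (fun t => ⨅ i, f i t) s := by
  simpa only [Finset.inf'_univ_eq_ciInf] using
    ContinuousOn.finset_inf'_apply Finset.univ_nonempty fun i _ => hf i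

variable [DecidableEq ι]

lemma hasDerivWithinAt_mulVec_sub {A D : Matrix ι ι ℝ} (hD : IsUnit D)
    {z₁ z₂ : ℝ → ι → ℝ} {s : Set ℝ} {t : ℝ}
    (h₁ : ∀ i, HasDerivWithinAt (fun s => z₁ s i) ((A *ᵥ z₁ t) i) s t)
    (h₂ : ∀ i, HasDerivWithinAt (fun s => z₂ s i) ((A *ᵥ z₂ t) i) s t) (i : ι) :
    HasDerivWithinAt (fun s => (D *ᵥ (z₁ s - z₂ s)) i)
      (((D * A * D⁻¹) *ᵥ (D *ᵥ (z₁ t - z₂ t))) i) s t := by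
  rw [mulVec_mulVec, Matrix.mul_assoc _ D⁻¹, nonsing_inv_mul D ((isUnit_iff_isUnit_det D).1 hD),
    Matrix.mul_one, ← mulVec_mulVec, mulVec_sub]
  exact HasDerivWithinAt.fun_sum fun j _ => ((h₁ j).sub (h₂ j)).const_mul (D i j)

lemma inv_diagonal_of_ne_zero {e : ι → ℝ} (he : ∀ i, e i ≠ 0) :
    (diagonal e)⁻¹ = diagonal fun i => (e i)⁻¹ := by
  refine inv_eq_right_inv ?_
  rw [diagonal_mul_diagonal, ← diagonal_one]
  exact congrArg diagonal (funext fun i => mul_inv_cancel₀ (he i))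

lemma diagonal_mul_mul_inv_diagonal_apply {e : ι → ℝ} (he : ∀ i, e i ≠ 0)
    (A : Matrix ι ι ℝ) (i j : ι) :
    (diagonal e * A * (diagonal e)⁻¹) i j = e i * A i j / e j := by
  rw [inv_diagonal_of_ne_zero he, mul_diagonal, diagonal_mul, div_eq_mul_inv]

lemma diagonal_mul_mul_inv_diagonal_apply_nonneg {e : ι → ℝ} (he : ∀ i, 0 < e i)
    {A : Matrix ι ι ℝ} {i j : ι} (hA : 0 ≤ A i j) : 0 ≤ (diagonal e * A * (diagonal e)⁻¹) i j := by
  rw [diagonal_mul_mul_inv_diagonal_apply fun i => (he i).ne']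
  exact div_nonneg (mul_nonneg (he i).le hA) (he j).le

lemma continuousOn_diagonal_mul_mul_inv_diagonal_apply {e : ι → ℝ} (he : ∀ i, e i ≠ 0)
    {A : ℝ → Matrix ι ι ℝ} {s : Set ℝ} {i j : ι} (hA : ContinuousOn (fun t => A t i j) s) :
    ContinuousOn (fun t => (diagonal e * A t * (diagonal e)⁻¹) i j) s := by
  simp only [diagonal_mul_mul_inv_diagonal_apply he]
  exact (continuousOn_const.mul hA).div_const _

lemma tendsto_sum_abs_zero_of_le_exp_neg {e : ι → ℝ} (he : ∀ i, 0 < e i) {v : ℝ → ι → ℝ}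
    {I : ℝ → ℝ} {C : ℝ} (hI : Tendsto I atTop atTop)
    (hv : ∀ᶠ t in atTop, ∑ i, |(diagonal e *ᵥ v t) i| ≤ Real.exp (-I t) * C) :
    Tendsto (fun t => ∑ i, |v t i|) atTop (𝓝 0) := by
  have hlim : Tendsto (fun t => (∑ i, (e i)⁻¹) * (Real.exp (-I t) * C)) atTop (𝓝 0) := by
    simpa using ((Real.tendsto_exp_atBot.comp (tendsto_neg_atTop_atBot.comp hI)).mul_const
      C).const_mul (∑ i, (e i)⁻¹)
  refine squeeze_zero' (.of_forall fun t => Finset.sum_nonneg fun i _ => abs_nonneg _)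
    (hv.mono fun t ht => (sum_abs_le_sum_inv_mul_sum_abs_mul he (v t)).trans ?_) hlim
  simp only [mulVec_diagonal] at ht
  gcongr
  exact Finset.sum_nonneg fun i _ => (inv_pos.2 (he i)).le

end EssentiallyNonnegative

lemma sum_Icc_one_erase_succ {M : Type*} [AddCommGroup M] {S : ℕ} (g : ℕ → M) (k : Fin S) :
    ∑ i ∈ (Finset.Icc 1 S).erase (k + 1), g i = ∑ i ∈ Finset.univ.erase k, g (i + 1) := by
  rw [Finset.sum_erase_eq_sub (Finset.mem_Icc.2 ⟨by omega, k.isLt⟩),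
    Finset.sum_erase_eq_sub (Finset.mem_univ k), Fin.sum_univ_eq_sum_range (fun i => g (i + 1)),
    Finset.range_eq_Ico, Finset.sum_Ico_add']
  rfl

section absB

variable {S : ℕ} {q : ℕ → ℕ → ℝ → ℝ}

lemma absB_apply_of_ne {i j : Fin S} (hij : i ≠ j) (t : ℝ) :
    absB S q t i j = q (j + 1) (i + 1) t :=
  if_neg hij

lemma absB_apply_nonneg_of_ne {t : ℝ} (hq : ∀ i j, i ≤ S → j ≤ S → i ≠ j → 0 ≤ q i j t)
    {i j : Fin S} (hij : i ≠ j) : 0 ≤ absB S q t i j := by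
  rw [absB_apply_of_ne hij]
  exact hq _ _ j.isLt i.isLt (by simpa [Fin.val_inj] using hij.symm)

lemma continuousOn_absB_apply {s : Set ℝ}
    (hq : ∀ i j, i ≤ S → j ≤ S → i ≠ j → ContinuousOn (q i j) s) (i j : Fin S) :
    ContinuousOn (fun t => absB S q t i j) s := by
  rcases eq_or_ne i j with rfl | hij
  · simp only [absB, if_true]
    refine (continuousOn_finsetSum _ fun k hk => ?_).neg
    obtain ⟨hki, hk⟩ := Finset.mem_erase.1 hk
    exact hq _ _ i.isLt (Finset.mem_range_succ_iff.1 hk) hki.symm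
  · simp only [absB_apply_of_ne hij]
    exact hq _ _ j.isLt i.isLt (by simpa [Fin.val_inj] using hij.symm)

lemma sum_diagonal_mul_absB_mul_inv_apply {d : ℕ → ℝ} (hd : ∀ i : Fin S, d (i + 1) ≠ 0)
    (t : ℝ) (k : Fin S) :
    ∑ i, (diagonal (fun i : Fin S => d (i + 1)) * absB S q t *
        (diagonal fun i : Fin S => d (i + 1))⁻¹) i k =
      ∑ i ∈ (Finset.Icc 1 S).erase (k + 1), d i / d (k + 1) * q (k + 1) i t -
        ∑ j ∈ (Finset.range (S + 1)).erase (k + 1), q (k + 1) j t := by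
  simp only [diagonal_mul_mul_inv_diagonal_apply hd]
  rw [← Finset.sum_erase_add _ _ (Finset.mem_univ k), sum_Icc_one_erase_succ, sub_eq_add_neg]
  congr 1
  · refine Finset.sum_congr rfl fun i hi => ?_
    rw [absB_apply_of_ne (Finset.ne_of_mem_erase hi)]
    ring
  · simp only [absB, if_true]
    field_simp [hd k]

end absB

theorem absorbing_upper_bound_and_ergodicity_general
    (S : ℕ) (hS : 1 ≤ S)
    (q : ℕ → ℕ → ℝ → ℝ) (d : ℕ → ℝ)
    (hq : ∀ i j, i ≤ S → j ≤ S → i ≠ j →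
      ContinuousOn (q i j) (Ici 0) ∧ ∀ t ∈ Ici (0 : ℝ), 0 ≤ q i j t)
    (hd : ∀ k, 1 ≤ k → k ≤ S → 0 < d k)
    (D : Matrix (Fin S) (Fin S) ℝ)
    (hD : D = Matrix.diagonal (fun i : Fin S => d ((i : ℕ) + 1)))
    (alpha : Fin S → ℝ → ℝ)
    (halpha : ∀ k t, alpha k t =
      (∑ j ∈ (Finset.range (S + 1)).erase ((k : ℕ) + 1), q ((k : ℕ) + 1) j t) -
        ∑ i ∈ (Finset.Icc 1 S).erase ((k : ℕ) + 1),
          d i / d ((k : ℕ) + 1) * q ((k : ℕ) + 1) i t)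
    (bstar : ℝ → ℝ) (hbstar : ∀ t, bstar t = ⨅ k, alpha k t)
    (z₁ z₂ : ℝ → Fin S → ℝ)
    (hz₁ : ∀ t ∈ Ici (0 : ℝ), ∀ i, HasDerivWithinAt (fun s => z₁ s i)
      ((absB S q t).mulVec (z₁ t) i) (Ici 0) t)
    (hz₂ : ∀ t ∈ Ici (0 : ℝ), ∀ i, HasDerivWithinAt (fun s => z₂ s i)
      ((absB S q t).mulVec (z₂ t) i) (Ici 0) t) :
    (∀ t ∈ Ici (0 : ℝ), ∀ i j : Fin S, i ≠ j → 0 ≤ absB S q t i j) ∧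
    (∀ t ∈ Ici (0 : ℝ), ∀ i j : Fin S, i ≠ j → 0 ≤ (D * absB S q t * D⁻¹) i j) ∧
    (∀ t ∈ Ici (0 : ℝ), ∀ k : Fin S,
      alpha k t = -∑ i, (D * absB S q t * D⁻¹) i k) ∧
    (∀ t ∈ Ici (0 : ℝ),
      ∑ i, |D.mulVec (z₁ t - z₂ t) i| ≤
        Real.exp (-∫ τ in (0 : ℝ)..t, bstar τ) * ∑ i, |D.mulVec (z₁ 0 - z₂ 0) i|) ∧
    (Tendsto (fun T => ∫ τ in (0 : ℝ)..T, bstar τ) atTop atTop →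
      Tendsto (fun t => ∑ i, |z₁ t i - z₂ t i|) atTop (nhds 0)) := by
  have : Nonempty (Fin S) := ⟨⟨0, hS⟩⟩
  subst hD
  have he : ∀ i : Fin S, 0 < d (i + 1) := fun i => hd _ (Nat.le_add_left 1 _) i.isLt
  have he₀ : ∀ i : Fin S, d (i + 1) ≠ 0 := fun i => (he i).ne'
  have hB_nonneg : ∀ t ∈ Ici (0 : ℝ), ∀ i j : Fin S, i ≠ j → 0 ≤ absB S q t i j :=
    fun t ht i j => absB_apply_nonneg_of_ne fun i j hi hj hij => (hq i j hi hj hij).2 t ht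
  have hH_nonneg := fun t ht i j hij =>
    diagonal_mul_mul_inv_diagonal_apply_nonneg he (hB_nonneg t ht i j hij)
  have halpha_col : ∀ t k, alpha k t = -∑ i, (diagonal (fun i : Fin S => d (i + 1)) *
      absB S q t * (diagonal fun i : Fin S => d (i + 1))⁻¹) i k := fun t k => by
    rw [sum_diagonal_mul_absB_mul_inv_apply he₀, halpha, neg_sub]
  have hbstar_cont : ContinuousOn bstar (Ici 0) := by
    simp only [funext hbstar, halpha_col]
    exact continuousOn_ciInf fun k => (continuousOn_finsetSum _ fun i _ =>
      continuousOn_diagonal_mul_mul_inv_diagonal_apply he₀ (continuousOn_absB_apply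
        (fun i j hi hj hij => (hq i j hi hj hij).1) i k)).neg
  have hbstar_le : ∀ t k, bstar t ≤ alpha k t := fun t k => by
    rw [hbstar]
    exact ciInf_le (Set.finite_range _).bddBelow k
  have bound := fun t (ht : t ∈ Ici (0 : ℝ)) => sum_abs_le_exp_neg_integral hH_nonneg
    (fun t _ j => by linarith [halpha_col t j, hbstar_le t j]) hbstar_cont
    (fun t ht => hasDerivWithinAt_mulVec_sub (isUnit_diagonal.2 (Pi.isUnit_iff.2 fun i =>
      (he₀ i).isUnit)) (hz₁ t ht) (hz₂ t ht)) ht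
  refine ⟨hB_nonneg, hH_nonneg, fun t _ => halpha_col t, bound, fun hI => ?_⟩
  exact tendsto_sum_abs_zero_of_le_exp_neg he hI ((eventually_ge_atTop 0).mono bound)

/-- Theorem 4 (upper bound and weak ergodicity) for a Markov chain with
absorption in zero: `B(t)` and `H(t) = D B(t) D⁻¹` are essentially nonnegative
for any positive diagonal `D`, `α_k = ∑_{j≠k} q_{kj} − ∑_{i≠k} (dᵢ/dₖ) q_{ki}`
equals `−∑ᵢ H(t)ᵢₖ`, and with `β* = min_k α_k` the exponential upper bound and
weak ergodicity hold. -/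
theorem absorbing_upper_bound_and_ergodicity
    (S : ℕ) (hS : 1 ≤ S)
    (q : ℕ → ℕ → ℝ → ℝ) (d : ℕ → ℝ)
    (hq : ∀ i j, i ≤ S → j ≤ S → i ≠ j →
      ContinuousOn (q i j) (Ici 0) ∧ ∀ t ∈ Ici (0 : ℝ), 0 ≤ q i j t)
    (habs : ∀ j, 1 ≤ j → ∀ t, q 0 j t = 0)
    (hd : ∀ k, 1 ≤ k → k ≤ S → 0 < d k)
    (D : Matrix (Fin S) (Fin S) ℝ)
    (hD : D = Matrix.diagonal (fun i : Fin S => d ((i : ℕ) + 1)))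
    (alpha : Fin S → ℝ → ℝ)
    (halpha : ∀ k t, alpha k t =
      (∑ j ∈ (Finset.range (S + 1)).erase ((k : ℕ) + 1), q ((k : ℕ) + 1) j t) -
        ∑ i ∈ (Finset.Icc 1 S).erase ((k : ℕ) + 1),
          d i / d ((k : ℕ) + 1) * q ((k : ℕ) + 1) i t)
    (bstar : ℝ → ℝ) (hbstar : ∀ t, bstar t = ⨅ k, alpha k t)
    (z₁ z₂ : ℝ → Fin S → ℝ)
    (hz₁ : ∀ t ∈ Ici (0 : ℝ), ∀ i, HasDerivWithinAt (fun s => z₁ s i)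
      ((absB S q t).mulVec (z₁ t) i) (Ici 0) t)
    (hz₂ : ∀ t ∈ Ici (0 : ℝ), ∀ i, HasDerivWithinAt (fun s => z₂ s i)
      ((absB S q t).mulVec (z₂ t) i) (Ici 0) t) :
    (∀ t ∈ Ici (0 : ℝ), ∀ i j : Fin S, i ≠ j → 0 ≤ absB S q t i j) ∧
    (∀ t ∈ Ici (0 : ℝ), ∀ i j : Fin S, i ≠ j → 0 ≤ (D * absB S q t * D⁻¹) i j) ∧
    (∀ t ∈ Ici (0 : ℝ), ∀ k : Fin S,
      alpha k t = -∑ i, (D * absB S q t * D⁻¹) i k) ∧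
    (∀ t ∈ Ici (0 : ℝ),
      ∑ i, |D.mulVec (z₁ t - z₂ t) i| ≤
        Real.exp (-∫ τ in (0 : ℝ)..t, bstar τ) * ∑ i, |D.mulVec (z₁ 0 - z₂ 0) i|) ∧
    (Tendsto (fun T => ∫ τ in (0 : ℝ)..T, bstar τ) atTop atTop →
      Tendsto (fun t => ∑ i, |z₁ t i - z₂ t i|) atTop (nhds 0)) :=
  absorbing_upper_bound_and_ergodicity_general S hS q d hq hd D hD alpha halpha bstar hbstar z₁ z₂
    hz₁ hz₂
end

section
/- (Example 3: sharp rate for a birth–death process with absorption in zero.) Fix S ≥ 2 and a continuous function φ : [0,∞) → [0,∞). Consider the absorbing-state setting with birth–death intensities: q_{k,k+1}(t) = 2φ(t) for 1 ≤ k ≤ S−1, q_{1,0}(t) = 3φ(t), q_{k,k−1}(t) = 6φ(t) for 2 ≤ k ≤ S−1, q_{S,S−1}(t) = 2φ(t), all other intensities zero (in particular q_{0j} ≡ 0). Take d_k = 2^{k−1} for 1 ≤ k ≤ S and D = diag(d_1,…,d_S). Then α_k(t) := ∑_{j=0, j≠k}^{S} q_{kj}(t) − ∑_{i=1, i≠k}^{S}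 (d_i/d_k) q_{ki}(t) equals φ(t) for every 1 ≤ k ≤ S and t ≥ 0; consequently, for any two differentiable functions z*, z** : [0,∞) → ℝ^S with z'(t) = B(t)z(t) for all t ≥ 0, one has ‖D(z*(t) − z**(t))‖₁ ≤ exp(−∫₀ᵗ φ(τ) dτ) · ‖D(z*(0) − z**(0))‖₁ for all t ≥ 0, with equality whenever z*(0) − z**(0) ≥ 0 componentwise. -/
/-!
Conjugating by `D` turns `B(t)` into `M(t) = D B(t) D⁻¹`, whose off-diagonal entries are
nonnegative and whose `k`-th column sums to `-α_k(t) = -φ(t)`. For a solution of `w' = M w`,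
pairing `w'` with a sign vector `σ` of `w` (`σ_i w_i = |w_i|`, `|σ_i| ≤ 1`) bounds the right
derivative of `‖w‖₁` by `-φ ‖w‖₁`, and Gronwall's argument with the integrating factor
`exp (∫₀ᵗ φ)` gives the estimate. The column sums also give `(∑ w_i)' = -φ ∑ w_i` exactly, so
when `w(0) ≥ 0` the lower bound `‖w(t)‖₁ ≥ ∑ w_i(t)` matches the estimate.
-/

open Set

/-- The intensities of Example 3: `q_{k,k+1} = 2φ` for `1 ≤ k ≤ S−1`,
`q_{1,0} = 3φ`, `q_{k,k−1} = 6φ` for `2 ≤ k ≤ S−1`, `q_{S,S−1} = 2φ`, all other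
intensities zero (in particular state `0` is absorbing). -/
def exQ (S : ℕ) (phi : ℝ → ℝ) : ℕ → ℕ → ℝ → ℝ :=
  fun i j t =>
    if 1 ≤ i ∧ i ≤ S - 1 ∧ j = i + 1 then 2 * phi t
    else if i = 1 ∧ j = 0 then 3 * phi t
    else if 2 ≤ i ∧ i ≤ S - 1 ∧ j = i - 1 then 6 * phi t
    else if i = S ∧ j = S - 1 then 2 * phi t
    else 0

open Matrix

/-- `α_k(t)` for weights `d_1, …, d_S`, with the states indexed by `ℕ`. -/
noncomputable def absAlpha (S : ℕ) (q : ℕ → ℕ → ℝ → ℝ) (d : ℕ → ℝ) (k : ℕ) (t : ℝ) : ℝ :=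
  ∑ j ∈ (Finset.range (S + 1)).erase k, q k j t -
    ∑ i ∈ (Finset.Icc 1 S).erase k, d i / d k * q k i t

theorem HasDerivWithinAt.exists_hasDerivWithinAt_abs_Ici {f : ℝ → ℝ} {d t : ℝ}
    (hf : HasDerivWithinAt f d (Ici t) t) :
    ∃ σ : ℝ, |σ| ≤ 1 ∧ σ * f t = |f t| ∧
      HasDerivWithinAt (fun s => |f s|) (σ * d) (Ici t) t := by
  rcases ne_or_eq (f t) 0 with h | h
  · refine ⟨SignType.sign (f t), ?_, sign_mul_self _,
      (hasDerivAt_abs h).comp_hasDerivWithinAt t hf⟩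
    rcases lt_trichotomy (f t) 0 with h' | h' | h' <;> simp [h']
  · -- at a zero of `f`, the right slopes of `|f|` are the absolute values of those of `f`
    have habs : HasDerivWithinAt (fun s => |f s|) |d| (Ici t) t := by
      rw [hasDerivWithinAt_iff_tendsto_slope]
      refine (hasDerivWithinAt_iff_tendsto_slope.mp hf).abs.congr'
        (eventually_nhdsWithin_of_forall fun s hs => ?_)
      have hts : 0 < s - t := sub_pos.mpr (lt_of_le_of_ne hs.1 (Ne.symm hs.2))
      simp [slope_def_field, h, abs_div, abs_of_pos hts]
    rcases le_or_gt 0 d with hd | hd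
    · exact ⟨1, by simp, by simp [h], by simpa [abs_of_nonneg hd] using habs⟩
    · exact ⟨-1, by simp, by simp [h], by simpa [abs_of_neg hd] using habs⟩

theorem hasDerivWithinAt_Ici_integral_of_continuousOn {φ : ℝ → ℝ} (hφ : ContinuousOn φ (Ici 0))
    {t : ℝ} (ht : 0 ≤ t) :
    HasDerivWithinAt (fun x => ∫ τ in (0 : ℝ)..x, φ τ) (φ t) (Ici t) t := by
  have hsub : Ioi t ⊆ Ici 0 := fun x hx => ht.trans hx.le
  refine intervalIntegral.integral_hasDerivWithinAt_right (t := Ioi t)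
    (hφ.mono ?_).intervalIntegrable ?_ ((hφ t ht).mono hsub)
  · rw [uIcc_of_le ht]
    exact Icc_subset_Ici_self
  · exact ⟨Ioi t, self_mem_nhdsWithin, (hφ.mono hsub).aestronglyMeasurable measurableSet_Ioi⟩

theorem le_exp_neg_integral_mul_of_hasDerivWithinAt_Ici {φ u : ℝ → ℝ}
    (hφ : ContinuousOn φ (Ici 0)) (hu : ContinuousOn u (Ici 0))
    (hu' : ∀ t ∈ Ici (0 : ℝ), ∃ d, HasDerivWithinAt u d (Ici t) t ∧ d ≤ -φ t * u t)
    {b : ℝ} (hb : 0 ≤ b) :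
    u b ≤ Real.exp (-∫ τ in (0 : ℝ)..b, φ τ) * u 0 := by
  choose! u' hderiv hle using hu'
  set I : ℝ → ℝ := fun x => ∫ τ in (0 : ℝ)..x, φ τ
  have hI : ContinuousOn I (Icc 0 b) := by
    have hφb : ContinuousOn φ (uIcc 0 b) :=
      hφ.mono (by rw [uIcc_of_le hb]; exact Icc_subset_Ici_self)
    simpa [uIcc_of_le hb] using
      intervalIntegral.continuousOn_primitive_interval (hφb.integrableOn_compact isCompact_uIcc)
  have hmono : Real.exp (I b) * u b ≤ Real.exp (I 0) * u 0 := by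
    refine image_le_of_deriv_right_le_deriv_boundary (B := fun _ => Real.exp (I 0) * u 0)
      (B' := 0) ((Real.continuous_exp.comp_continuousOn hI).mul (hu.mono Icc_subset_Ici_self))
      (fun t ht => (hasDerivWithinAt_Ici_integral_of_continuousOn hφ ht.1).exp.mul (hderiv t ht.1))
      le_rfl continuousOn_const (fun t _ => hasDerivWithinAt_const _ _ _) (fun t ht => ?_)
      ⟨hb, le_rfl⟩
    have := mul_le_mul_of_nonneg_left (hle t ht.1) (Real.exp_pos (I t)).le
    simp only [Pi.zero_apply]
    linarith
  rw [show I 0 = 0 from intervalIntegral.integral_same, Real.exp_zero, one_mul] at hmono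
  rw [Real.exp_neg, ← div_eq_inv_mul, le_div_iff₀ (Real.exp_pos _), mul_comm]
  exact hmono

section ColumnSums

variable {ι : Type*} [Fintype ι] {M : Matrix ι ι ℝ} {c : ℝ}

theorem sum_mulVec_eq_neg_mul_sum (hcol : ∀ j, ∑ i, M i j = -c) (w : ι → ℝ) :
    ∑ i, (M *ᵥ w) i = -c * ∑ i, w i := by
  simp only [mulVec, dotProduct]
  rw [Finset.sum_comm]
  simp only [← Finset.sum_mul, hcol, Finset.mul_sum]

theorem sum_mul_mulVec_le_neg_mul_sum_abs (hM : ∀ i j, i ≠ j → 0 ≤ M i j)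
    (hcol : ∀ j, ∑ i, M i j = -c) {σ w : ι → ℝ} (hσ : ∀ i, |σ i| ≤ 1)
    (hσw : ∀ i, σ i * w i = |w i|) :
    ∑ i, σ i * (M *ᵥ w) i ≤ -c * ∑ i, |w i| := by
  have hterm : ∀ i j, σ i * M i j * w j ≤ M i j * |w j| := by
    intro i j
    rcases eq_or_ne i j with rfl | hij
    · exact le_of_eq (by rw [← hσw]; ring)
    · have hMij := hM i j hij
      calc σ i * M i j * w j ≤ |σ i * M i j * w j| := le_abs_self _
        _ = |σ i| * M i j * |w j| := by rw [abs_mul, abs_mul, abs_of_nonneg hMij]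
        _ ≤ 1 * M i j * |w j| := by gcongr; exact hσ i
        _ = M i j * |w j| := by ring
  calc ∑ i, σ i * (M *ᵥ w) i = ∑ j, ∑ i, σ i * M i j * w j := by
        simp only [mulVec, dotProduct, Finset.mul_sum, mul_assoc]
        exact Finset.sum_comm
    _ ≤ ∑ j, ∑ i, M i j * |w j| :=
        Finset.sum_le_sum fun j _ => Finset.sum_le_sum fun i _ => hterm i j
    _ = -c * ∑ j, |w j| := by simp only [← Finset.sum_mul, hcol, Finset.mul_sum]

end ColumnSums

section LinearSystem

variable {ι : Type*} [Fintype ι] {φ : ℝ → ℝ} {M : ℝ → Matrix ι ι ℝ} {w : ℝ → ι → ℝ}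

theorem sum_eq_exp_neg_integral_mul_of_colSum (hφ : ContinuousOn φ (Ici 0))
    (hcol : ∀ t ∈ Ici (0 : ℝ), ∀ j, ∑ i, M t i j = -φ t)
    (hw : ∀ t ∈ Ici (0 : ℝ), ∀ i,
      HasDerivWithinAt (fun s => w s i) ((M t *ᵥ w t) i) (Ici 0) t)
    {b : ℝ} (hb : 0 ≤ b) :
    ∑ i, w b i = Real.exp (-∫ τ in (0 : ℝ)..b, φ τ) * ∑ i, w 0 i := by
  have hcont : ContinuousOn (fun s => ∑ i, w s i) (Ici 0) :=
    continuousOn_finsetSum _ fun i _ t ht => (hw t ht i).continuousWithinAt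
  have hderiv : ∀ t ∈ Ici (0 : ℝ),
      HasDerivWithinAt (fun s => ∑ i, w s i) (-φ t * ∑ i, w t i) (Ici t) t := by
    intro t ht
    rw [← sum_mulVec_eq_neg_mul_sum (hcol t ht)]
    exact HasDerivWithinAt.fun_sum fun i _ => (hw t ht i).mono (Ici_subset_Ici.mpr ht)
  apply le_antisymm
  · exact le_exp_neg_integral_mul_of_hasDerivWithinAt_Ici hφ hcont
      (fun t ht => ⟨_, hderiv t ht, le_rfl⟩) hb
  · have := le_exp_neg_integral_mul_of_hasDerivWithinAt_Ici (u := fun s => -∑ i, w s i) hφ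
      hcont.neg (fun t ht => ⟨_, (hderiv t ht).neg, le_of_eq (by ring)⟩) hb
    linarith

theorem sum_abs_le_exp_neg_integral_mul_of_colSum (hφ : ContinuousOn φ (Ici 0))
    (hM : ∀ t ∈ Ici (0 : ℝ), ∀ i j, i ≠ j → 0 ≤ M t i j)
    (hcol : ∀ t ∈ Ici (0 : ℝ), ∀ j, ∑ i, M t i j = -φ t)
    (hw : ∀ t ∈ Ici (0 : ℝ), ∀ i,
      HasDerivWithinAt (fun s => w s i) ((M t *ᵥ w t) i) (Ici 0) t)
    {b : ℝ} (hb : 0 ≤ b) :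
    ∑ i, |w b i| ≤ Real.exp (-∫ τ in (0 : ℝ)..b, φ τ) * ∑ i, |w 0 i| := by
  refine le_exp_neg_integral_mul_of_hasDerivWithinAt_Ici hφ
    (continuousOn_finsetSum _ fun i _ t ht => (hw t ht i).continuousWithinAt.abs)
    (fun t ht => ?_) hb
  choose σ hσ hσw hderiv using
    fun i => ((hw t ht i).mono (Ici_subset_Ici.mpr ht)).exists_hasDerivWithinAt_abs_Ici
  exact ⟨_, HasDerivWithinAt.fun_sum fun i _ => hderiv i,
    sum_mul_mulVec_le_neg_mul_sum_abs (hM t ht) (hcol t ht) hσ hσw⟩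

theorem sum_abs_eq_exp_neg_integral_mul_of_colSum (hφ : ContinuousOn φ (Ici 0))
    (hM : ∀ t ∈ Ici (0 : ℝ), ∀ i j, i ≠ j → 0 ≤ M t i j)
    (hcol : ∀ t ∈ Ici (0 : ℝ), ∀ j, ∑ i, M t i j = -φ t)
    (hw : ∀ t ∈ Ici (0 : ℝ), ∀ i,
      HasDerivWithinAt (fun s => w s i) ((M t *ᵥ w t) i) (Ici 0) t)
    (hw₀ : ∀ i, 0 ≤ w 0 i) {b : ℝ} (hb : 0 ≤ b) :
    ∑ i, |w b i| = Real.exp (-∫ τ in (0 : ℝ)..b, φ τ) * ∑ i, |w 0 i| := by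
  refine le_antisymm (sum_abs_le_exp_neg_integral_mul_of_colSum hφ hM hcol hw hb) ?_
  calc Real.exp (-∫ τ in (0 : ℝ)..b, φ τ) * ∑ i, |w 0 i|
      = ∑ i, w b i := by
        simp only [abs_of_nonneg (hw₀ _), sum_eq_exp_neg_integral_mul_of_colSum hφ hcol hw hb]
    _ ≤ ∑ i, |w b i| := Finset.sum_le_sum fun i _ => le_abs_self _

end LinearSystem

theorem diagonal_mul_mul_diagonal_inv_mulVec {ι : Type*} [Fintype ι] [DecidableEq ι]
    {d : ι → ℝ} (hd : ∀ i, d i ≠ 0) (B : Matrix ι ι ℝ) (v : ι → ℝ) :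
    (diagonal d * B * diagonal d⁻¹) *ᵥ (diagonal d *ᵥ v) = diagonal d *ᵥ (B *ᵥ v) := by
  simp [Matrix.mul_assoc, mulVec_mulVec, diagonal_mul_diagonal, hd]

theorem Fin.sum_univ_add_one_eq_sum_Icc {A : Type*} [AddCommMonoid A] (S : ℕ) (g : ℕ → A) :
    ∑ i : Fin S, g (i + 1) = ∑ x ∈ Finset.Icc 1 S, g x := by
  rw [Fin.sum_univ_eq_sum_range (fun i => g (i + 1)), Finset.range_eq_Ico, Finset.sum_Ico_add',
    zero_add, Finset.Ico_add_one_right_eq_Icc]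

theorem sum_diagonal_mul_absB_mul_diagonal_inv_col (S : ℕ) (q : ℕ → ℕ → ℝ → ℝ) {d : ℕ → ℝ}
    (t : ℝ) (j : Fin S) (hd : d (j + 1) ≠ 0) :
    ∑ i, (diagonal (fun i : Fin S => d (i + 1)) * absB S q t *
      diagonal (fun i : Fin S => d (i + 1))⁻¹) i j = -absAlpha S q d (j + 1) t := by
  set g : ℕ → ℝ := fun x => d x / d (j + 1) * q (j + 1) x t
  have hentry : ∀ i, (diagonal (fun i : Fin S => d (i + 1)) * absB S q t *
      diagonal (fun i : Fin S => d (i + 1))⁻¹) i j =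
      g (i + 1) + if i = j then absB S q t j j - g (j + 1) else 0 := by
    intro i
    rcases eq_or_ne i j with rfl | hij
    · simp [field]
    · simp [absB, hij, g, div_eq_mul_inv]
      ring
  have hmem : (j : ℕ) + 1 ∈ Finset.Icc 1 S := Finset.mem_Icc.mpr ⟨by omega, j.isLt⟩
  rw [Finset.sum_congr rfl fun i _ => hentry i, Finset.sum_add_distrib, Finset.sum_ite_eq',
    if_pos (Finset.mem_univ j), Fin.sum_univ_add_one_eq_sum_Icc S g, absAlpha,
    Finset.sum_erase_eq_sub hmem]
  simp [absB]
  ring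

theorem exQ_nonneg (S : ℕ) {phi : ℝ → ℝ} {t : ℝ} (h : 0 ≤ phi t) (i j : ℕ) :
    0 ≤ exQ S phi i j t := by
  unfold exQ
  split_ifs <;> linarith

theorem exQ_of_one_le_of_le (S : ℕ) (phi : ℝ → ℝ) {k : ℕ} (hk : 1 ≤ k) (hkS : k ≤ S)
    (j : ℕ) (t : ℝ) :
    exQ S phi k j t =
      (if j = k + 1 then (if k < S then 2 * phi t else 0) else 0) +
      (if j = k - 1 then (if k = 1 then 3 * phi t else if k < S then 6 * phi t else 2 * phi t)
        else 0) := by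
  unfold exQ
  split_ifs <;> first | omega | ring

theorem absAlpha_exQ {S : ℕ} (hS : 2 ≤ S) (phi : ℝ → ℝ) {k : ℕ} (hk : 1 ≤ k) (hkS : k ≤ S)
    (t : ℝ) : absAlpha S (exQ S phi) (fun i => 2 ^ (i - 1)) k t = phi t := by
  unfold absAlpha
  simp only [exQ_of_one_le_of_le S phi hk hkS, mul_add, mul_ite, mul_zero,
    Finset.sum_add_distrib, Finset.sum_ite_eq', Finset.mem_erase, Finset.mem_range,
    Finset.mem_Icc]
  obtain rfl | hk1 := eq_or_ne k 1
  · simp [show 1 < S by omega, hS]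
    ring
  obtain hkS' | rfl := lt_or_eq_of_le hkS
  · obtain ⟨m, rfl⟩ : ∃ m, k = m + 2 := ⟨k - 2, by omega⟩
    simp [hkS', show m + 2 + 1 ≤ S by omega, show m < S by omega, pow_succ]
    field_simp
    ring
  · obtain ⟨m, rfl⟩ : ∃ m, k = m + 2 := ⟨k - 2, by omega⟩
    simp [pow_succ]
    field_simp
    ring

/-- Example 3 (sharp rate for a birth–death process with absorption in zero):
with `d_k = 2^{k−1}` every `α_k(t)` equals `φ(t)`, so
`‖D(z*(t) − z**(t))‖₁ ≤ exp(−∫₀ᵗ φ) ‖D(z*(0) − z**(0))‖₁`, with equality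
whenever `z*(0) − z**(0) ≥ 0` componentwise. -/
theorem absorbing_bd_example_sharp_rate
    (S : ℕ) (hS : 2 ≤ S)
    (phi : ℝ → ℝ)
    (hphi : ContinuousOn phi (Ici 0) ∧ ∀ t ∈ Ici (0 : ℝ), 0 ≤ phi t)
    (D : Matrix (Fin S) (Fin S) ℝ)
    (hD : D = Matrix.diagonal (fun i : Fin S => (2 : ℝ) ^ (i : ℕ)))
    (z₁ z₂ : ℝ → Fin S → ℝ)
    (hz₁ : ∀ t ∈ Ici (0 : ℝ), ∀ i, HasDerivWithinAt (fun s => z₁ s i)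
      ((absB S (exQ S phi) t).mulVec (z₁ t) i) (Ici 0) t)
    (hz₂ : ∀ t ∈ Ici (0 : ℝ), ∀ i, HasDerivWithinAt (fun s => z₂ s i)
      ((absB S (exQ S phi) t).mulVec (z₂ t) i) (Ici 0) t) :
    (∀ t ∈ Ici (0 : ℝ), ∀ k : Fin S,
      (∑ j ∈ (Finset.range (S + 1)).erase ((k : ℕ) + 1), exQ S phi ((k : ℕ) + 1) j t) -
        (∑ i ∈ (Finset.Icc 1 S).erase ((k : ℕ) + 1),
          (2 : ℝ) ^ (i - 1) / (2 : ℝ) ^ (k : ℕ) * exQ S phi ((k : ℕ) + 1) i t) =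
        phi t) ∧
    (∀ t ∈ Ici (0 : ℝ),
      ∑ i, |D.mulVec (z₁ t - z₂ t) i| ≤
        Real.exp (-∫ τ in (0 : ℝ)..t, phi τ) * ∑ i, |D.mulVec (z₁ 0 - z₂ 0) i|) ∧
    ((∀ i, 0 ≤ z₁ 0 i - z₂ 0 i) →
      ∀ t ∈ Ici (0 : ℝ),
        ∑ i, |D.mulVec (z₁ t - z₂ t) i| =
          Real.exp (-∫ τ in (0 : ℝ)..t, phi τ) * ∑ i, |D.mulVec (z₁ 0 - z₂ 0) i|) := by
  obtain ⟨hφ, hφ₀⟩ := hphi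
  set d : Fin S → ℝ := fun i => 2 ^ (i : ℕ)
  have hd : ∀ i, d i ≠ 0 := fun i => by positivity
  set M : ℝ → Matrix (Fin S) (Fin S) ℝ := fun t => diagonal d * absB S (exQ S phi) t * diagonal d⁻¹
  have hα : ∀ t, ∀ k : Fin S, absAlpha S (exQ S phi) (fun i => 2 ^ (i - 1)) (k + 1) t = phi t :=
    fun t k => absAlpha_exQ hS phi (by omega) k.isLt t
  have hcol : ∀ t ∈ Ici (0 : ℝ), ∀ j, ∑ i, M t i j = -phi t := fun t _ j => by
    simpa [hα, M, d, diagonal_mul, mul_diagonal] using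
      sum_diagonal_mul_absB_mul_diagonal_inv_col S (exQ S phi) (d := fun x => (2 : ℝ) ^ (x - 1))
        t j (by positivity)
  have hM : ∀ t ∈ Ici (0 : ℝ), ∀ i j, i ≠ j → 0 ≤ M t i j := fun t ht i j hij => by
    simp only [M, d, diagonal_mul, mul_diagonal, absB, if_neg hij, Pi.inv_apply]
    have := exQ_nonneg S (hφ₀ t ht) (j + 1) (i + 1)
    positivity
  have hw : ∀ t ∈ Ici (0 : ℝ), ∀ i, HasDerivWithinAt (fun s => (D *ᵥ (z₁ s - z₂ s)) i)
      ((M t *ᵥ (D *ᵥ (z₁ t - z₂ t))) i) (Ici 0) t := fun t ht i => by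
    simp only [M, hD, diagonal_mul_mul_diagonal_inv_mulVec hd, mulVec_diagonal, mulVec_sub,
      Pi.sub_apply]
    exact (((hz₁ t ht i).sub (hz₂ t ht i)).const_mul (d i)).congr_deriv (mul_sub _ _ _)
  refine ⟨fun t _ k => hα t k,
    fun t ht => sum_abs_le_exp_neg_integral_mul_of_colSum hφ hM hcol hw ht,
    fun hpos t ht => sum_abs_eq_exp_neg_integral_mul_of_colSum hφ hM hcol hw (fun i => ?_) ht⟩
  rw [hD, mulVec_diagonal]
  exact mul_nonneg (by positivity) (hpos i)
end
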